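/- arXiv:2411.18086 — 4 statements merged into one kernel-verified Lean document; each statement's English description precedes it below -/
import Mathlib

section
/- Let x_c0^i, x_c0^j be distinct points in ℝ², x_q0 a point, x_q : [0,T] → ℝ² a curve, and r_c > 0. Define H^{ij}(t) = {x ∈ ℝ² : (x_c0^j - x_c0^i)ᵀ(x - x_q(t) + x_q0 - (x_c0^i + x_c0^j)/2) + r_c‖x_c0^j - x_c0^i‖ ≤ 0} and H^{ji}(t) symmetrically with i and j swapped. If x^i(t) ∈ H^{ij}(t) and x^j(t) ∈ H^{ji}(t) for all t ∈ [0,T], then ‖x^i(t) - x^j(t)‖ ≥ 2r_c for all t ∈ [0,T]. -/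
open Set RealInnerProductSpace

/-- DBVC safety lemma: two agents whose trajectories remain in their
respective Dynamic Buffered Voronoi Cells never collide. -/
theorem dbvc_safety
    (xc0i xc0j xq0 : EuclideanSpace ℝ (Fin 2))
    (xq xi xj : ℝ → EuclideanSpace ℝ (Fin 2))
    (T rc : ℝ) (hT : 0 ≤ T) (hrc : 0 < rc) (hne : xc0i ≠ xc0j)
    (hi : ∀ t ∈ Icc (0:ℝ) T,
      ⟪xc0j - xc0i, xi t - xq t + xq0 - (2:ℝ)⁻¹ • (xc0i + xc0j)⟫
        + rc * ‖xc0j - xc0i‖ ≤ 0)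
    (hj : ∀ t ∈ Icc (0:ℝ) T,
      ⟪xc0i - xc0j, xj t - xq t + xq0 - (2:ℝ)⁻¹ • (xc0j + xc0i)⟫
        + rc * ‖xc0i - xc0j‖ ≤ 0) :
    ∀ t ∈ Icc (0:ℝ) T, 2 * rc ≤ ‖xi t - xj t‖ := by
  intro t ht
  have h1 := hi t ht
  have h2 := hj t ht
  set d := xc0j - xc0i with hd
  have hdpos : 0 < ‖d‖ := by
    rw [norm_pos_iff]
    intro h
    exact hne (by rwa [sub_eq_zero, eq_comm] at h)
  have hdn : ‖xc0i - xc0j‖ = ‖d‖ := by rw [hd, norm_sub_rev]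
  rw [hdn] at h2
  have hid : xc0i - xc0j = -d := by rw [hd]; abel
  rw [hid, inner_neg_left] at h2
  -- sum the two inequalities
  have hsum : ⟪d, xi t - xq t + xq0 - (2:ℝ)⁻¹ • (xc0i + xc0j)⟫
      - ⟪d, xj t - xq t + xq0 - (2:ℝ)⁻¹ • (xc0j + xc0i)⟫ + 2 * (rc * ‖d‖) ≤ 0 := by
    linarith
  rw [← inner_sub_right] at hsum
  have hveq : (xi t - xq t + xq0 - (2:ℝ)⁻¹ • (xc0i + xc0j))
      - (xj t - xq t + xq0 - (2:ℝ)⁻¹ • (xc0j + xc0i)) = xi t - xj t := by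
    rw [add_comm xc0j xc0i]; abel
  rw [hveq] at hsum
  have hcs : ⟪d, xj t - xi t⟫ ≤ ‖d‖ * ‖xj t - xi t‖ := real_inner_le_norm _ _
  have h3 : ⟪d, xj t - xi t⟫ = - ⟪d, xi t - xj t⟫ := by
    rw [← inner_neg_right, neg_sub]
  have h4 : 2 * (rc * ‖d‖) ≤ ‖d‖ * ‖xj t - xi t‖ := by
    rw [h3] at hcs; linarith
  have h5 : ‖xj t - xi t‖ = ‖xi t - xj t‖ := norm_sub_rev _ _
  rw [h5] at h4
  nlinarith
end

section
/- With the DBVC H_s^{ij}(t) = {x : (x_c0^j - x_c0^i)ᵀ(x - x_q(t) + x_q0 - (x_c0^i + x_c0^j)/2) + r_c‖x_c0^j - x_c0^i‖ ≤ 0}, assuming ‖x_c0^i - x_c0^j‖ ≥ 2r_c, the translated trajectory x(t) = x_c0^i + (x_q(t) - x_q0) satisfies x(t) ∈ H_s^{ij}(t) for all t. -/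
open RealInnerProductSpace

/-- Feasibility of the DBVC: rigidly translating agent `i` with the target's
displacement keeps it inside its DBVC against agent `j` at all times. -/
theorem dbvc_feasibility
    (xc0i xc0j xq0 : EuclideanSpace ℝ (Fin 2))
    (xq : ℝ → EuclideanSpace ℝ (Fin 2))
    (rc : ℝ) (hrc : 0 < rc)
    (hsep : ‖xc0i - xc0j‖ ≥ 2 * rc) :
    ∀ t : ℝ,
      ⟪xc0j - xc0i, (xc0i + (xq t - xq0)) - xq t + xq0 - (2:ℝ)⁻¹ • (xc0i + xc0j)⟫
        + rc * ‖xc0j - xc0i‖ ≤ 0 := by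
  intro t
  have hv : (xc0i + (xq t - xq0)) - xq t + xq0 - (2:ℝ)⁻¹ • (xc0i + xc0j)
      = -((2:ℝ)⁻¹ • (xc0j - xc0i)) := by
    module
  rw [hv, inner_neg_right, inner_smul_right, real_inner_self_eq_norm_sq]
  have hn : ‖xc0j - xc0i‖ = ‖xc0i - xc0j‖ := by rw [norm_sub_rev]
  rw [hn]
  nlinarith [norm_nonneg (xc0i - xc0j)]
end

section
/- Let a, b, c ∈ ℝ². If ‖a - c‖² ≥ R², (a - c)ᵀ(b - c) ≥ r², and ‖b - c‖² ≥ R'² with R, R', r ≥ 0 and min(R, R', r) ≥ r_o, then for every ε ∈ [0,1], ‖ε a + (1-ε) b - c‖ ≥ r_o; i.e., the entire segment from b to a stays outside the open ball of radius r_o around c. -/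
open Set RealInnerProductSpace

/-- Sufficient condition for the segment from `b` to `a` to stay outside the
open ball of radius `r_o` around `c`. -/
theorem segment_avoids_ball
    (a b c : EuclideanSpace ℝ (Fin 2)) (R R' r ro : ℝ)
    (hR : 0 ≤ R) (hR' : 0 ≤ R') (hr : 0 ≤ r)
    (hro : ro ≤ min (min R R') r)
    (h1 : ‖a - c‖ ^ 2 ≥ R ^ 2)
    (h2 : ⟪a - c, b - c⟫ ≥ r ^ 2)
    (h3 : ‖b - c‖ ^ 2 ≥ R' ^ 2) :
    ∀ ε ∈ Icc (0:ℝ) 1, ‖ε • a + (1 - ε) • b - c‖ ≥ ro := by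
  intro ε hε
  obtain ⟨hε0, hε1⟩ := hε
  have hεc : (0:ℝ) ≤ 1 - ε := by linarith
  have hroR : ro ≤ R := hro.trans ((min_le_left _ _).trans (min_le_left _ _))
  have hroR' : ro ≤ R' := hro.trans ((min_le_left _ _).trans (min_le_right _ _))
  have hror : ro ≤ r := hro.trans (min_le_right _ _)
  rcases le_or_gt ro 0 with h | h
  · exact h.trans (norm_nonneg _)
  have key : ε • a + (1 - ε) • b - c = ε • (a - c) + (1 - ε) • (b - c) := by
    module
  rw [key]
  have hnorm : ‖ε • (a - c) + (1 - ε) • (b - c)‖ ^ 2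
      = ε ^ 2 * ‖a - c‖ ^ 2 + 2 * ε * (1 - ε) * ⟪a - c, b - c⟫
        + (1 - ε) ^ 2 * ‖b - c‖ ^ 2 := by
    rw [norm_add_sq_real, norm_smul, norm_smul, real_inner_smul_left,
      real_inner_smul_right, Real.norm_eq_abs, Real.norm_eq_abs,
      abs_of_nonneg hε0, abs_of_nonneg hεc]
    ring
  have hsq : ro ^ 2 ≤ ‖ε • (a - c) + (1 - ε) • (b - c)‖ ^ 2 := by
    rw [hnorm]
    have e1 : ro ^ 2 ≤ R ^ 2 := pow_le_pow_left₀ h.le hroR 2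
    have e2 : ro ^ 2 ≤ R' ^ 2 := pow_le_pow_left₀ h.le hroR' 2
    have e3 : ro ^ 2 ≤ r ^ 2 := pow_le_pow_left₀ h.le hror 2
    nlinarith [sq_nonneg ε, sq_nonneg (1 - ε), mul_nonneg hε0 hεc,
      mul_nonneg (mul_nonneg hε0 hεc) (sub_nonneg.mpr (e3.trans h2))]
  nlinarith [norm_nonneg (ε • (a - c) + (1 - ε) • (b - c)), hsq]
end

section
/- Let x_c0^i ≠ x_c0^j in ℝ² and x_q0, and define the DBVC H_s^{ij}(t) as in equation (7). If additionally agent i satisfies ‖x_c0^i - x_c0^j‖ ≥ 2r_c and x^i(t) = x_c0^i + (x_q(t) - x_q0), x^j(t) = x_c0^j + (x_q(t) - x_q0), then simultaneously x^i(t) ∈ H_s^{ij}(t) and x^j(t) ∈ H_s^{ji}(t) for all t, and ‖x^i(t) - x^j(t)‖ = ‖x_c0^i - x_c0^j‖ ≥ 2r_c. -/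
open RealInnerProductSpace

lemma dbvc_aux (a b : EuclideanSpace ℝ (Fin 2)) (xq0 w : EuclideanSpace ℝ (Fin 2))
    (rc : ℝ) (hrc : 0 < rc) (hsep : ‖a - b‖ ≥ 2 * rc) :
    ⟪b - a, (a + (w - xq0)) - w + xq0 - (2:ℝ)⁻¹ • (a + b)⟫ + rc * ‖b - a‖ ≤ 0 := by
  have hv : (a + (w - xq0)) - w + xq0 - (2:ℝ)⁻¹ • (a + b)
      = -((2:ℝ)⁻¹ • (b - a)) := by module
  rw [hv, inner_neg_right, real_inner_smul_right, real_inner_self_eq_norm_sq,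
    norm_sub_rev b a]
  set n := ‖a - b‖ with hn
  have hn0 : 0 ≤ n := norm_nonneg _
  nlinarith

/-- Combined DBVC feasibility and correctness for rigid target-following
motion: co-translating trajectories satisfy both agents' DBVC membership and
keep a constant, collision-free inter-agent distance. -/
theorem dbvc_cotranslation_feasible_and_safe
    (xc0i xc0j xq0 : EuclideanSpace ℝ (Fin 2))
    (xq : ℝ → EuclideanSpace ℝ (Fin 2))
    (rc : ℝ) (hrc : 0 < rc) (hne : xc0i ≠ xc0j)
    (hsep : ‖xc0i - xc0j‖ ≥ 2 * rc) :
    ∀ t : ℝ,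
      (⟪xc0j - xc0i, (xc0i + (xq t - xq0)) - xq t + xq0
          - (2:ℝ)⁻¹ • (xc0i + xc0j)⟫ + rc * ‖xc0j - xc0i‖ ≤ 0) ∧
      (⟪xc0i - xc0j, (xc0j + (xq t - xq0)) - xq t + xq0
          - (2:ℝ)⁻¹ • (xc0j + xc0i)⟫ + rc * ‖xc0i - xc0j‖ ≤ 0) ∧
      ‖(xc0i + (xq t - xq0)) - (xc0j + (xq t - xq0))‖ = ‖xc0i - xc0j‖ ∧
      ‖(xc0i + (xq t - xq0)) - (xc0j + (xq t - xq0))‖ ≥ 2 * rc := by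
  intro t
  have hsep' : ‖xc0j - xc0i‖ ≥ 2 * rc := by rwa [norm_sub_rev]
  have heq : (xc0i + (xq t - xq0)) - (xc0j + (xq t - xq0)) = xc0i - xc0j := by abel
  exact ⟨dbvc_aux xc0i xc0j xq0 (xq t) rc hrc hsep,
    dbvc_aux xc0j xc0i xq0 (xq t) rc hrc hsep',
    by rw [heq], by rw [heq]; exact hsep⟩
end
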